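/- Let y ∈ ℝⁿ, X ∈ ℝ^{n×p}, λ > 0, let r be any norm on ℝ^p, and let w ∈ ℝ^p satisfy w₁ ≥ w₂ ≥ ⋯ ≥ w_p ≥ 0 with w₁ > 0. Define the uncertainty set U_w^λ = {Δ ∈ ℝ^{n×p} : ‖Δφ‖₂ ≤ λ Σ_{i=1}^p wᵢ |φ_(i)| for all φ ∈ ℝ^p}. Then the problem min over β of (min over Δ ∈ U_w^λ of ‖y − (X + Δ)β‖₂) + r(β) has the same optimal value and the same set of optimal solutions as the constrained problem: minimize ‖y − Xβ‖₂ + r(β) − λ R_SLOPE(w)(β) over β ∈ ℝ^p subject to λ R_SLOPE(w)(β) ≤ ‖y − Xβ‖₂. -/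

import Mathlib

open Finset

/-- Absolute values of the entries of `β`, sorted in increasing order. -/
noncomputable def sortAbs {p : ℕ} (β : Fin p → ℝ) : Fin p → ℝ :=
  fun i => |β (Tuple.sort (fun j => |β j|) i)|

/-- `|β_(i)|`: absolute values of the entries of `β` sorted in decreasing
order (`descAbs β i = |β_(i+1)|`). -/
noncomputable def descAbs {p : ℕ} (β : Fin p → ℝ) : Fin p → ℝ :=
  fun i => sortAbs β i.rev

/-- The SLOPE penalty `R_SLOPE(w)(β) = ∑_{i=1}^p w_i |β_(i)|`. -/
noncomputable def slopePen {p : ℕ} (w : Fin p → ℝ) (β : Fin p → ℝ) : ℝ :=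
  ∑ i, w i * descAbs β i

/-- The Euclidean norm of a vector. -/
noncomputable def norm2 {m : ℕ} (v : Fin m → ℝ) : ℝ := Real.sqrt (∑ i, v i ^ 2)

/-- The uncertainty set `U_w^λ = {Δ : ‖Δφ‖₂ ≤ λ R_SLOPE(w)(φ) for all φ}`. -/
def slopeUnc {n p : ℕ} (w : Fin p → ℝ) (lam : ℝ) : Set (Matrix (Fin n) (Fin p) ℝ) :=
  {Δ | ∀ φ : Fin p → ℝ, norm2 (Δ.mulVec φ) ≤ lam * slopePen w φ}

/-- The min-min robust objective
`β ↦ (min_{Δ ∈ U_w^λ} ‖y - (X+Δ)β‖₂) + r(β)`. -/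
noncomputable def minminObj {n p : ℕ} (y : Fin n → ℝ) (X : Matrix (Fin n) (Fin p) ℝ)
    (w : Fin p → ℝ) (lam : ℝ) (r : (Fin p → ℝ) → ℝ) (β : Fin p → ℝ) : ℝ :=
  sInf {v : ℝ | ∃ Δ ∈ slopeUnc (n := n) (p := p) w lam,
    v = norm2 (y - (X + Δ).mulVec β)} + r β

/-!
For fixed `β` the inner minimum over `U_w^λ` is `max (‖y - Xβ‖₂ - λ R_SLOPE(w)(β)) 0`: the
triangle inequality gives the lower bound, and the rank-one perturbation `c z gᵀ`, with `z` the
residual and `g` a dual certificate of the SLOPE norm at `β` (signs of `β` times sorted weights),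
attains it. So the min-min objective is the constrained one on the feasible set and `r β` off it.
An infeasible `β ≠ 0` is beaten by the point `t β`, `0 ≤ t < 1`, where the ray towards `0` meets
the boundary `λ R_SLOPE(w)(tβ) = ‖y - X tβ‖₂` (intermediate value theorem): its value is
`t r β < r β`.
-/

open Matrix

section Norm2

variable {m : ℕ}

lemma norm2_eq_norm_toLp (v : Fin m → ℝ) : norm2 v = ‖WithLp.toLp 2 v‖ := by
  simp [norm2, EuclideanSpace.norm_eq, sq_abs]

lemma norm2_nonneg (v : Fin m → ℝ) : 0 ≤ norm2 v := Real.sqrt_nonneg _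

lemma norm2_smul (c : ℝ) (v : Fin m → ℝ) : norm2 (c • v) = |c| * norm2 v := by
  simp only [norm2_eq_norm_toLp, WithLp.toLp_smul, norm_smul, Real.norm_eq_abs]

lemma norm2_sub_norm2_le (a b : Fin m → ℝ) : norm2 a - norm2 b ≤ norm2 (a - b) := by
  simpa only [norm2_eq_norm_toLp, WithLp.toLp_sub] using norm_sub_norm_le _ _

lemma continuous_norm2 : Continuous (norm2 : (Fin m → ℝ) → ℝ) := by
  rw [funext norm2_eq_norm_toLp]
  exact continuous_norm.comp (PiLp.continuous_toLp 2 _)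

end Norm2

section Slope

variable {p : ℕ} {w : Fin p → ℝ}

lemma antitone_descAbs (β : Fin p → ℝ) : Antitone (descAbs β) :=
  fun _ _ hij => Tuple.monotone_sort (fun j => |β j|) (Fin.rev_le_rev.mpr hij)

lemma exists_perm_slopePen_eq (w β : Fin p → ℝ) :
    ∃ π : Equiv.Perm (Fin p), slopePen w β = ∑ j, w (π j) * |β j| := by
  set σ := Tuple.sort fun j => |β j|
  refine ⟨σ.symm.trans Fin.revPerm, Fintype.sum_equiv (Fin.revPerm.trans σ) _ _ fun i => ?_⟩
  simp [descAbs, sortAbs, σ]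

lemma sum_perm_le_slopePen (hw : Antitone w) (φ : Fin p → ℝ) (π : Equiv.Perm (Fin p)) :
    ∑ j, w (π j) * |φ j| ≤ slopePen w φ := by
  set τ := (Fin.revPerm.trans (Tuple.sort fun j => |φ j|))
  calc ∑ j, w (π j) * |φ j| = ∑ i, w ((τ.trans π) i) * descAbs φ i :=
        (Fintype.sum_equiv τ _ _ fun i => by simp [descAbs, sortAbs, τ]).symm
    _ ≤ slopePen w φ := (hw.monovary (antitone_descAbs φ)).sum_comp_perm_mul_le_sum_mul

lemma slopePen_nonneg (hw : ∀ i, 0 ≤ w i) (β : Fin p → ℝ) : 0 ≤ slopePen w β :=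
  Finset.sum_nonneg fun i _ => mul_nonneg (hw i) (abs_nonneg _)

lemma slopePen_smul (hw : Antitone w) (c : ℝ) (β : Fin p → ℝ) :
    slopePen w (c • β) = |c| * slopePen w β := by
  have hsum (π : Equiv.Perm (Fin p)) :
      ∑ j, w (π j) * |(c • β) j| = |c| * ∑ j, w (π j) * |β j| := by
    simp only [Finset.mul_sum, Pi.smul_apply, smul_eq_mul, abs_mul]
    exact Finset.sum_congr rfl fun j _ => by ring
  obtain ⟨π, hπ⟩ := exists_perm_slopePen_eq w (c • β)
  obtain ⟨π', hπ'⟩ := exists_perm_slopePen_eq w β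
  apply le_antisymm
  · rw [hπ, hsum]
    exact mul_le_mul_of_nonneg_left (sum_perm_le_slopePen hw β π) (abs_nonneg c)
  · rw [hπ', ← hsum]
    exact sum_perm_le_slopePen hw (c • β) π'

lemma exists_dotProduct_eq_slopePen (hw : Antitone w) (hw0 : ∀ i, 0 ≤ w i) (β : Fin p → ℝ) :
    ∃ g : Fin p → ℝ, g ⬝ᵥ β = slopePen w β ∧ ∀ φ, |g ⬝ᵥ φ| ≤ slopePen w φ := by
  obtain ⟨π, hπ⟩ := exists_perm_slopePen_eq w β
  refine ⟨fun j => w (π j) * SignType.sign (β j), ?_, fun φ => ?_⟩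
  · simp only [hπ, dotProduct, mul_assoc, sign_mul_self]
  · calc |∑ j, w (π j) * SignType.sign (β j) * φ j|
        ≤ ∑ j, |w (π j) * SignType.sign (β j) * φ j| := Finset.abs_sum_le_sum_abs _ _
      _ ≤ ∑ j, w (π j) * |φ j| := Finset.sum_le_sum fun j _ => by
          rw [abs_mul, abs_mul, abs_of_nonneg (hw0 _)]
          have hsign : |(SignType.sign (β j) : ℝ)| ≤ 1 := by
            rcases lt_trichotomy (β j) 0 with h | h | h <;> simp [h]
          rw [mul_right_comm]
          exact mul_le_of_le_one_right (mul_nonneg (hw0 _) (abs_nonneg _)) hsign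
      _ ≤ slopePen w φ := sum_perm_le_slopePen hw φ π

end Slope

section Uncertainty

variable {n p : ℕ} {w : Fin p → ℝ} {lam : ℝ}

lemma vecMulVec_mem_slopeUnc {z : Fin n → ℝ} {g : Fin p → ℝ} {c : ℝ} (hc : 0 ≤ c)
    (hcz : c * norm2 z ≤ lam) (hg : ∀ φ, |g ⬝ᵥ φ| ≤ slopePen w φ) :
    vecMulVec (c • z) g ∈ slopeUnc w lam := fun φ => by
  rw [vecMulVec_mulVec, op_smul_eq_smul, norm2_smul, norm2_smul, abs_of_nonneg hc, mul_comm]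
  exact mul_le_mul hcz (hg φ) (abs_nonneg _) ((mul_nonneg hc (norm2_nonneg z)).trans hcz)

lemma abs_one_sub_div_max_mul {N ρ : ℝ} (hN : 0 ≤ N) (hρ : 0 ≤ ρ) :
    |1 - ρ / max N ρ| * N = max (N - ρ) 0 := by
  rcases le_total N ρ with h | h
  · rw [max_eq_right h, max_eq_right (by linarith)]
    rcases hρ.eq_or_lt with rfl | hρ
    · simp [le_antisymm h hN]
    · simp [hρ.ne']
  · rw [max_eq_left h, max_eq_left (by linarith)]
    rcases hN.eq_or_lt with rfl | hN
    · simp [le_antisymm h hρ]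
    · rw [abs_of_nonneg (by rw [sub_nonneg]; exact div_le_one_of_le₀ h hN.le)]
      field_simp

theorem sInf_norm2_sub_mulVec_slopeUnc (hlam : 0 ≤ lam) (hw : Antitone w) (hw0 : ∀ i, 0 ≤ w i)
    (z : Fin n → ℝ) (β : Fin p → ℝ) :
    sInf {v | ∃ Δ ∈ slopeUnc w lam, v = norm2 (z - Δ *ᵥ β)} =
      max (norm2 z - lam * slopePen w β) 0 := by
  set N := norm2 z
  set ρ := lam * slopePen w β
  have hN : 0 ≤ N := norm2_nonneg z
  have hρ : 0 ≤ ρ := mul_nonneg hlam (slopePen_nonneg hw0 β)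
  refine IsLeast.csInf_eq ⟨?_, ?_⟩
  · obtain ⟨g, hgβ, hg⟩ := exists_dotProduct_eq_slopePen hw hw0 β
    set c := lam / max N ρ
    have hc : 0 ≤ c := by positivity
    have hcN : c * N ≤ lam := by
      rw [div_mul_eq_mul_div, mul_div_assoc]
      exact mul_le_of_le_one_right hlam
        (div_le_one_of_le₀ (le_max_left _ _) (le_max_of_le_left hN))
    refine ⟨vecMulVec (c • z) g, vecMulVec_mem_slopeUnc hc hcN hg, ?_⟩
    have hres : z - vecMulVec (c • z) g *ᵥ β = (1 - ρ / max N ρ) • z := by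
      rw [vecMulVec_mulVec, op_smul_eq_smul, hgβ, smul_smul, sub_smul, one_smul]
      congr 2
      simp only [c, ρ]
      ring
    rw [hres, norm2_smul, abs_one_sub_div_max_mul hN hρ]
  · rintro v ⟨Δ, hΔ, rfl⟩
    refine max_le ?_ (norm2_nonneg _)
    linarith [hΔ β, norm2_sub_norm2_le z (Δ *ᵥ β)]

lemma minminObj_eq (y : Fin n → ℝ) (X : Matrix (Fin n) (Fin p) ℝ) (hlam : 0 ≤ lam)
    (hw : Antitone w) (hw0 : ∀ i, 0 ≤ w i) (r : (Fin p → ℝ) → ℝ) (β : Fin p → ℝ) :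
    minminObj y X w lam r β =
      max (norm2 (y - X *ᵥ β) - lam * slopePen w β) 0 + r β := by
  simp only [minminObj, add_mulVec, ← sub_sub]
  rw [sInf_norm2_sub_mulVec_slopeUnc hlam hw hw0]

end Uncertainty

section ConstrainedReformulation

variable {V : Type*} {N ρ r : V → ℝ} {β : V}

/-- `N`, `ρ`, `r` play the roles of `β ↦ ‖y - Xβ‖₂`, `β ↦ λ R_SLOPE(w)(β)` and the norm `r`. -/
def robustObj (N ρ r : V → ℝ) (β : V) : ℝ := max (N β - ρ β) 0 + r β

def constrainedObj (N ρ r : V → ℝ) (β : V) : ℝ := N β + r β - ρ β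

lemma robustObj_of_le (h : ρ β ≤ N β) : robustObj N ρ r β = constrainedObj N ρ r β := by
  rw [robustObj, constrainedObj, max_eq_left (sub_nonneg.mpr h)]
  ring

lemma robustObj_of_lt (h : N β < ρ β) : robustObj N ρ r β = r β := by
  rw [robustObj, max_eq_right (by linarith), zero_add]

variable [AddCommGroup V] [Module ℝ V]

lemma exists_smul_feasible_constrainedObj_eq (hN : Continuous fun t : ℝ => N (t • β))
    (hN0 : 0 ≤ N 0) (hρ : ∀ t : ℝ, 0 ≤ t → ρ (t • β) = t * ρ β)
    (hr : ∀ t : ℝ, 0 ≤ t → r (t • β) = t * r β) (hβ : N β < ρ β) :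
    ∃ t ∈ Set.Ico (0 : ℝ) 1, ρ (t • β) ≤ N (t • β) ∧ constrainedObj N ρ r (t • β) = t * r β := by
  have hcont : ContinuousOn (fun t : ℝ => N (t • β) - t * ρ β) (Set.Icc 0 1) :=
    (hN.sub (continuous_id.mul continuous_const)).continuousOn
  have hends : (0 : ℝ) ∈ Set.Icc (N ((1 : ℝ) • β) - 1 * ρ β) (N ((0 : ℝ) • β) - 0 * ρ β) := by
    simp only [one_smul, zero_smul, one_mul, zero_mul, sub_zero]
    exact ⟨by linarith, hN0⟩
  obtain ⟨t, ⟨ht0, ht1⟩, hroot⟩ := intermediate_value_Icc' zero_le_one hcont hends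
  have hboundary : N (t • β) = ρ (t • β) := by
    rw [hρ t ht0]
    linarith [hroot]
  refine ⟨t, ⟨ht0, ht1.lt_of_ne ?_⟩, hboundary.ge, ?_⟩
  · rintro rfl
    simp only [one_smul, one_mul] at hroot
    linarith
  · rw [constrainedObj, hboundary, hr t ht0]
    ring

lemma exists_feasible_constrainedObj_le (hN : ∀ β : V, Continuous fun t : ℝ => N (t • β))
    (hN0 : 0 ≤ N 0) (hρ : ∀ (β : V) (t : ℝ), 0 ≤ t → ρ (t • β) = t * ρ β)
    (hr : ∀ (β : V) (t : ℝ), 0 ≤ t → r (t • β) = t * r β) (hr0 : ∀ β, 0 ≤ r β) (β : V) :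
    ∃ β', ρ β' ≤ N β' ∧ constrainedObj N ρ r β' ≤ robustObj N ρ r β := by
  rcases le_or_gt (ρ β) (N β) with h | h
  · exact ⟨β, h, (robustObj_of_le h).ge⟩
  · obtain ⟨t, ht, hfeas, heq⟩ :=
      exists_smul_feasible_constrainedObj_eq (hN β) hN0 (hρ β) (hr β) h
    refine ⟨t • β, hfeas, ?_⟩
    rw [heq, robustObj_of_lt h]
    exact mul_le_of_le_one_left (hr0 β) ht.2.le

theorem sInf_robustObj_eq_sInf_constrainedObj (hN : ∀ β : V, Continuous fun t : ℝ => N (t • β))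
    (hN0 : 0 ≤ N 0) (hρ : ∀ (β : V) (t : ℝ), 0 ≤ t → ρ (t • β) = t * ρ β)
    (hr : ∀ (β : V) (t : ℝ), 0 ≤ t → r (t • β) = t * r β) (hr0 : ∀ β, 0 ≤ r β) :
    sInf {v | ∃ β, v = robustObj N ρ r β} =
      sInf {v | ∃ β, ρ β ≤ N β ∧ v = constrainedObj N ρ r β} := by
  apply csInf_eq_csInf_of_forall_exists_le
  · rintro _ ⟨β, rfl⟩
    obtain ⟨β', hfeas, hle⟩ := exists_feasible_constrainedObj_le hN hN0 hρ hr hr0 β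
    exact ⟨_, ⟨β', hfeas, rfl⟩, hle⟩
  · rintro _ ⟨β, hfeas, rfl⟩
    exact ⟨_, ⟨β, rfl⟩, (robustObj_of_le hfeas).le⟩

theorem robustObj_minimizers_eq (hN : ∀ β : V, Continuous fun t : ℝ => N (t • β))
    (hN0 : 0 ≤ N 0) (hρ : ∀ (β : V) (t : ℝ), 0 ≤ t → ρ (t • β) = t * ρ β)
    (hr : ∀ (β : V) (t : ℝ), 0 ≤ t → r (t • β) = t * r β) (hr0 : ∀ β, 0 ≤ r β)
    (hr_def : ∀ β, r β = 0 → β = 0) :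
    {β | ∀ β', robustObj N ρ r β ≤ robustObj N ρ r β'} =
      {β | ρ β ≤ N β ∧ ∀ β', ρ β' ≤ N β' → constrainedObj N ρ r β ≤ constrainedObj N ρ r β'} := by
  ext β
  refine ⟨fun hmin => ?_, fun ⟨hfeas, hmin⟩ β' => ?_⟩
  · have hfeas : ρ β ≤ N β := by
      by_contra! h
      have hβ : β ≠ 0 := by
        rintro rfl
        have hρ0 := hρ 0 0 le_rfl
        simp only [smul_zero, zero_mul] at hρ0
        linarith
      have hrβ : 0 < r β := (hr0 β).lt_of_ne fun h0 => hβ (hr_def β h0.symm)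
      obtain ⟨t, ht, hfeas', heq⟩ :=
        exists_smul_feasible_constrainedObj_eq (hN β) hN0 (hρ β) (hr β) h
      have hle := hmin (t • β)
      rw [robustObj_of_lt h, robustObj_of_le hfeas', heq] at hle
      nlinarith [ht.2]
    refine ⟨hfeas, fun β' hfeas' => ?_⟩
    simpa only [robustObj_of_le hfeas, robustObj_of_le hfeas'] using hmin β'
  · obtain ⟨β'', hfeas'', hle⟩ := exists_feasible_constrainedObj_le hN hN0 hρ hr hr0 β'
    rw [robustObj_of_le hfeas]
    exact (hmin β'' hfeas'').trans hle

end ConstrainedReformulation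

theorem minmin_robust_slope_as_constrained_general {n p : ℕ}
    (y : Fin n → ℝ) (X : Matrix (Fin n) (Fin p) ℝ) (lam : ℝ) (hlam : 0 < lam)
    (w : Fin p → ℝ) (hw_anti : ∀ i j : Fin p, i ≤ j → w j ≤ w i)
    (hw_nonneg : ∀ i, 0 ≤ w i)
    (r : (Fin p → ℝ) → ℝ)
    (hr_add : ∀ a b, r (a + b) ≤ r a + r b)
    (hr_smul : ∀ (c : ℝ) a, r (c • a) = |c| * r a)
    (hr_def : ∀ a, r a = 0 → a = 0) :
    sInf {v : ℝ | ∃ β : Fin p → ℝ, v = minminObj y X w lam r β} =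
      sInf {v : ℝ | ∃ β : Fin p → ℝ,
        lam * slopePen w β ≤ norm2 (y - X.mulVec β) ∧
        v = norm2 (y - X.mulVec β) + r β - lam * slopePen w β} ∧
    {β : Fin p → ℝ | ∀ β' : Fin p → ℝ,
        minminObj y X w lam r β ≤ minminObj y X w lam r β'} =
      {β : Fin p → ℝ | lam * slopePen w β ≤ norm2 (y - X.mulVec β) ∧
        ∀ β' : Fin p → ℝ, lam * slopePen w β' ≤ norm2 (y - X.mulVec β') →
          norm2 (y - X.mulVec β) + r β - lam * slopePen w β ≤
            norm2 (y - X.mulVec β') + r β' - lam * slopePen w β'} := by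
  have hobj : minminObj y X w lam r =
      robustObj (fun β => norm2 (y - X *ᵥ β)) (fun β => lam * slopePen w β) r :=
    funext (minminObj_eq y X hlam.le hw_anti hw_nonneg r)
  have hN (β : Fin p → ℝ) : Continuous fun t : ℝ => norm2 (y - X *ᵥ (t • β)) := by
    simp only [mulVec_smul]
    exact continuous_norm2.comp (by fun_prop)
  have hρ (β : Fin p → ℝ) (t : ℝ) (ht : 0 ≤ t) :
      lam * slopePen w (t • β) = t * (lam * slopePen w β) := by
    rw [slopePen_smul hw_anti, abs_of_nonneg ht, mul_left_comm]
  have hr (β : Fin p → ℝ) (t : ℝ) (ht : 0 ≤ t) : r (t • β) = t * r β := by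
    rw [hr_smul, abs_of_nonneg ht]
  have hr0 : ∀ β, 0 ≤ r β :=
    apply_nonneg (Seminorm.of (𝕜 := ℝ) r hr_add fun c a => by rw [hr_smul, Real.norm_eq_abs])
  rw [hobj]
  exact ⟨sInf_robustObj_eq_sInf_constrainedObj hN (norm2_nonneg _) hρ hr hr0,
    robustObj_minimizers_eq hN (norm2_nonneg _) hρ hr hr0 hr_def⟩

/-- Proposition 3.1: for any norm `r` and SLOPE weights
`w₁ ≥ ⋯ ≥ w_p ≥ 0` with `w₁ > 0`, the min-min robust problem over `U_w^λ`
has the same optimal value and the same set of optimal solutions as the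
constrained problem
`min ‖y - Xβ‖₂ + r(β) - λ R_SLOPE(w)(β)  s.t.  λ R_SLOPE(w)(β) ≤ ‖y - Xβ‖₂`. -/
theorem minmin_robust_slope_as_constrained {n p : ℕ} (hp : 0 < p)
    (y : Fin n → ℝ) (X : Matrix (Fin n) (Fin p) ℝ) (lam : ℝ) (hlam : 0 < lam)
    (w : Fin p → ℝ) (hw_anti : ∀ i j : Fin p, i ≤ j → w j ≤ w i)
    (hw_nonneg : ∀ i, 0 ≤ w i) (hw1 : 0 < w ⟨0, hp⟩)
    (r : (Fin p → ℝ) → ℝ)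
    (hr_add : ∀ a b, r (a + b) ≤ r a + r b)
    (hr_smul : ∀ (c : ℝ) a, r (c • a) = |c| * r a)
    (hr_def : ∀ a, r a = 0 → a = 0) :
    sInf {v : ℝ | ∃ β : Fin p → ℝ, v = minminObj y X w lam r β} =
      sInf {v : ℝ | ∃ β : Fin p → ℝ,
        lam * slopePen w β ≤ norm2 (y - X.mulVec β) ∧
        v = norm2 (y - X.mulVec β) + r β - lam * slopePen w β} ∧
    {β : Fin p → ℝ | ∀ β' : Fin p → ℝ,
        minminObj y X w lam r β ≤ minminObj y X w lam r β'} =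
      {β : Fin p → ℝ | lam * slopePen w β ≤ norm2 (y - X.mulVec β) ∧
        ∀ β' : Fin p → ℝ, lam * slopePen w β' ≤ norm2 (y - X.mulVec β') →
          norm2 (y - X.mulVec β) + r β - lam * slopePen w β ≤
            norm2 (y - X.mulVec β') + r β' - lam * slopePen w β'} :=
  minmin_robust_slope_as_constrained_general y X lam hlam w hw_anti hw_nonneg r hr_add hr_smul
    hr_def
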